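/- arXiv:2510.18031 — 2 statements merged into one kernel-verified Lean document; each statement's English description precedes it below -/
import Mathlib

section
/- Let n ≥ 1 and let Γ, Δ be n×n real matrices with nonnegative entries such that ΓΔ = ΔΓ and Γ + Δ is irreducible. Suppose S ⊆ {1,…,n} and its complement Sᶜ are both nonempty and Γ_{ij} = 0 whenever exactly one of i, j lies in S. Then there exist a nonnegative real λ, a vector v indexed by S with all entries positive, and a vector w indexed by Sᶜ with all entries positive, such that the principal submatrices satisfy Γ[S]v = λv and Γ[Sᶜ]w = λw; moreover every real eigenvalue μ of Γ[S] and every real eigenvalue μ of Γ[Sᶜ] satisfies |μ| ≤ λ. (In particular, the diagonal blocks of Γ have the same dominant eigenvalue.) -/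
/-!
`Γ` commutes with every polynomial in `A = Γ + Δ`, in particular with `B = ∑_{k<N} Aᵏ`, which
is entrywise positive for large `N` because `A` is irreducible. By Perron's theorem `B` has a
positive eigenvector `z`, and its eigenspace is the line through `z`. Since `Γ` preserves that
eigenspace, `z` is also an eigenvector of `Γ`, for some eigenvalue `t`. The block structure of
`Γ` makes the restrictions of `z` to `S` and to `Sᶜ` positive eigenvectors of the two diagonal
blocks for the same `t`, and a positive eigenvector of a nonnegative matrix carries the
largest modulus of any real eigenvalue.
-/

open Finset

section LinearOrderedField

variable {ι R : Type*} [Fintype ι] [Field R] [LinearOrder R] [IsStrictOrderedRing R]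

theorem exists_forall_le_mul_and_eq_mul [Nonempty ι] (f : ι → R) {v : ι → R}
    (hv : ∀ i, 0 < v i) : ∃ (c : R) (i₀ : ι), (∀ j, f j ≤ c * v j) ∧ f i₀ = c * v i₀ := by
  obtain ⟨i₀, hi₀⟩ := Finite.exists_max fun i => f i / v i
  exact ⟨f i₀ / v i₀, i₀, fun j => (div_le_iff₀ (hv j)).1 (hi₀ j),
    (div_mul_cancel₀ _ (hv i₀).ne').symm⟩

namespace Matrix

theorem mulVec_apply_pos {B : Matrix ι ι R} (hB : ∀ i j, 0 < B i j) {x : ι → R}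
    (hx : 0 ≤ x) (hx0 : x ≠ 0) (i : ι) : 0 < (B *ᵥ x) i := by
  obtain ⟨k, hk⟩ := Function.ne_iff.mp hx0
  exact sum_pos' (fun j _ => mul_nonneg (hB i j).le (hx j))
    ⟨k, mem_univ k, mul_pos (hB i k) ((hx k).lt_of_ne' hk)⟩

theorem abs_le_of_mulVec_eq_smul {M : Matrix ι ι R} (hM : ∀ i j, 0 ≤ M i j)
    {v : ι → R} (hv : ∀ i, 0 < v i) {lam : R} (hMv : M *ᵥ v = lam • v)
    {μ : R} {x : ι → R} (hx0 : x ≠ 0) (hMx : M *ᵥ x = μ • x) : |μ| ≤ lam := by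
  obtain ⟨k, hk⟩ := Function.ne_iff.mp hx0
  have : Nonempty ι := ⟨k⟩
  -- Compare `|x|` with the least multiple `c • v` above it, at an index `i₀` where they touch.
  obtain ⟨c, i₀, hle, heq⟩ := exists_forall_le_mul_and_eq_mul (fun i => |x i|) hv
  have hx₀ : 0 < |x i₀| := by
    have hc : 0 < c := pos_of_mul_pos_left ((abs_pos.2 hk).trans_le (hle k)) (hv k).le
    rw [heq]; exact mul_pos hc (hv i₀)
  refine le_of_mul_le_mul_right ?_ hx₀
  calc |μ| * |x i₀| = |(M *ᵥ x) i₀| := by rw [hMx, Pi.smul_apply, smul_eq_mul, abs_mul]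
    _ ≤ ∑ j, M i₀ j * |x j| := by
      refine (abs_sum_le_sum_abs _ _).trans_eq (sum_congr rfl fun j _ => ?_)
      rw [abs_mul, abs_of_nonneg (hM i₀ j)]
    _ ≤ ∑ j, M i₀ j * (c * v j) := by gcongr with j; exact hM i₀ j; exact hle j
    _ = c * (M *ᵥ v) i₀ := by
      simp only [mulVec, dotProduct, mul_sum]
      exact sum_congr rfl fun j _ => by ring
    _ = lam * |x i₀| := by rw [hMv, heq, Pi.smul_apply, smul_eq_mul]; ring

theorem exists_eq_smul_of_mulVec_eq_smul {B : Matrix ι ι R} (hB : ∀ i j, 0 < B i j)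
    {z : ι → R} (hz : ∀ i, 0 < z i) {lam : R} (hBz : B *ᵥ z = lam • z)
    {x : ι → R} (hBx : B *ᵥ x = lam • x) : ∃ t : R, x = t • z := by
  rcases isEmpty_or_nonempty ι with _ | _
  · exact ⟨0, Subsingleton.elim _ _⟩
  obtain ⟨t, i₀, hle, heq⟩ := exists_forall_le_mul_and_eq_mul x hz
  refine ⟨t, (sub_eq_zero.1 ?_).symm⟩
  -- `t • z - x` is a nonnegative eigenvector vanishing at `i₀`, so positivity of `B` kills it.
  by_contra hne
  have hnonneg : 0 ≤ t • z - x := fun j => by simpa using hle j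
  have hpos := mulVec_apply_pos hB hnonneg hne i₀
  rw [mulVec_sub, mulVec_smul, hBz, hBx, smul_comm, ← smul_sub] at hpos
  simp [heq] at hpos

end Matrix

end LinearOrderedField

namespace Matrix

section Perron

variable {ι : Type*} [Fintype ι]

theorem exists_pos_mulVec_eq_smul [Nonempty ι] {B : Matrix ι ι ℝ} (hB : ∀ i j, 0 < B i j) :
    ∃ (r : ℝ) (z : ι → ℝ), (∀ i, 0 < z i) ∧ B *ᵥ z = r • z := by
  classical
  have hBpos : ∀ x ∈ stdSimplex ℝ ι, ∀ i, 0 < (B *ᵥ x) i := fun x hx =>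
    mulVec_apply_pos hB hx.1 fun h => by simpa [h] using hx.2
  -- Maximise the Collatz–Wielandt function `x ↦ minᵢ (B² x)ᵢ / (B x)ᵢ` over the simplex;
  -- `B x` is positive there, so the function is continuous.
  let φ : (ι → ℝ) → ℝ := fun x => univ.inf' univ_nonempty fun i => (B *ᵥ B *ᵥ x) i / (B *ᵥ x) i
  have hφ : ContinuousOn φ (stdSimplex ℝ ι) := by
    refine ContinuousOn.finset_inf'_apply _ fun i _ x hx => ContinuousWithinAt.div ?_ ?_
      (hBpos x hx i).ne' <;> fun_prop
  obtain ⟨x₀, hx₀, hmax⟩ := (isCompact_stdSimplex ℝ ι).exists_isMaxOn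
    ⟨_, single_mem_stdSimplex ℝ (Classical.arbitrary ι)⟩ hφ
  set z := B *ᵥ x₀
  have hz : ∀ i, 0 < z i := hBpos x₀ hx₀
  refine ⟨φ x₀, z, hz, ?_⟩
  by_contra hne
  -- Otherwise `B z - φ x₀ • z` is nonnegative and nonzero, so `B` maps it to a positive vector,
  -- and the normalisation of `z` beats `x₀`.
  have hnonneg : 0 ≤ B *ᵥ z - φ x₀ • z := fun i => by
    have hle : φ x₀ ≤ (B *ᵥ z) i / z i := inf'_le _ (mem_univ i)
    simpa using (le_div_iff₀ (hz i)).1 hle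
  have hlt : ∀ i, φ x₀ * (B *ᵥ z) i < (B *ᵥ B *ᵥ z) i := fun i => by
    simpa [mulVec_sub, mulVec_smul] using mulVec_apply_pos hB hnonneg (sub_ne_zero.2 hne) i
  set s := ∑ i, z i
  have hs : 0 < s := sum_pos (fun i _ => hz i) univ_nonempty
  have hx₁ : s⁻¹ • z ∈ stdSimplex ℝ ι := by
    refine ⟨fun i => by simpa using (mul_pos (inv_pos.2 hs) (hz i)).le, ?_⟩
    simp only [Pi.smul_apply, smul_eq_mul, ← mul_sum]
    exact inv_mul_cancel₀ hs.ne'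
  have hgt : φ x₀ < φ (s⁻¹ • z) := (lt_inf'_iff _).2 fun i _ => by
    rw [lt_div_iff₀ (hBpos _ hx₁ i)]
    simpa [mulVec_smul, mul_left_comm] using mul_lt_mul_of_pos_left (hlt i) (inv_pos.2 hs)
  exact (hmax hx₁).not_gt hgt

theorem exists_pos_mulVec_eq_smul_of_commute [Nonempty ι] {B M : Matrix ι ι ℝ}
    (hB : ∀ i j, 0 < B i j) (hMB : Commute M B) :
    ∃ (t : ℝ) (z : ι → ℝ), (∀ i, 0 < z i) ∧ M *ᵥ z = t • z := by
  obtain ⟨r, z, hz, hBz⟩ := exists_pos_mulVec_eq_smul hB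
  have hBMz : B *ᵥ M *ᵥ z = r • M *ᵥ z := by
    rw [mulVec_mulVec, ← hMB.eq, ← mulVec_mulVec, hBz, mulVec_smul]
  obtain ⟨t, ht⟩ := exists_eq_smul_of_mulVec_eq_smul hB hz hBz hBMz
  exact ⟨t, z, hz, ht⟩

end Perron

section

variable {ι R : Type*} [Fintype ι]

theorem IsIrreducible.exists_sum_pow_pos [DecidableEq ι] [Ring R] [LinearOrder R]
    [IsStrictOrderedRing R] {A : Matrix ι ι R} (hA : A.IsIrreducible) :
    ∃ N, ∀ i j, 0 < (∑ k ∈ range N, A ^ k) i j := by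
  choose m _ hm using (isIrreducible_iff_exists_pow_pos hA.nonneg).1 hA
  let M := univ.sup fun p : ι × ι => m p.1 p.2
  refine ⟨M + 1, fun i j => ?_⟩
  have hmM : m i j ≤ M := le_sup (f := fun p : ι × ι => m p.1 p.2) (mem_univ (i, j))
  rw [sum_apply]
  exact sum_pos' (fun k _ => pow_apply_nonneg hA.nonneg k i j)
    ⟨m i j, mem_range.2 (Nat.lt_succ_of_le hmM), hm i j⟩

theorem submatrix_val_mulVec_eq_smul [Semiring R] {M : Matrix ι ι R} {T : Finset ι}
    (hT : ∀ i ∈ T, ∀ j ∉ T, M i j = 0) {z : ι → R} {t : R} (hz : M *ᵥ z = t • z) :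
    M.submatrix (Subtype.val : T → ι) Subtype.val *ᵥ (fun j : T => z j) =
      t • fun j : T => z j := by
  ext i
  rw [Pi.smul_apply, ← Pi.smul_apply, ← hz]
  simp only [mulVec, dotProduct, submatrix_apply]
  rw [sum_coe_sort T fun j => M i j * z j]
  exact sum_subset (subset_univ T) fun j _ hj => by rw [hT i i.2 j hj, zero_mul]

end

end Matrix

open Matrix

theorem diagonal_blocks_same_dominant_eigenvalue_general
    (n : ℕ) (Γ Δ : Matrix (Fin n) (Fin n) ℝ)
    (hΓ0 : ∀ i j, 0 ≤ Γ i j) (hΔ0 : ∀ i j, 0 ≤ Δ i j)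
    (hcomm : Γ * Δ = Δ * Γ)
    (hirr : ∀ i j, ∃ m : ℕ, 1 ≤ m ∧ 0 < ((Γ + Δ) ^ m) i j)
    (S : Finset (Fin n)) (hS : S.Nonempty)
    (hblock : ∀ i j : Fin n, ((i ∈ S ∧ j ∉ S) ∨ (i ∉ S ∧ j ∈ S)) → Γ i j = 0) :
    ∃ (lam : ℝ) (v : {x // x ∈ S} → ℝ) (w : {x // x ∈ Sᶜ} → ℝ),
      0 ≤ lam ∧ (∀ i, 0 < v i) ∧ (∀ i, 0 < w i) ∧
      (Γ.submatrix (Subtype.val : {x // x ∈ S} → Fin n) Subtype.val).mulVec v = lam • v ∧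
      (Γ.submatrix (Subtype.val : {x // x ∈ Sᶜ} → Fin n) Subtype.val).mulVec w = lam • w ∧
      (∀ μ : ℝ, (∃ x : {x // x ∈ S} → ℝ, x ≠ 0 ∧
        (Γ.submatrix (Subtype.val : {x // x ∈ S} → Fin n) Subtype.val).mulVec x = μ • x) →
        |μ| ≤ lam) ∧
      (∀ μ : ℝ, (∃ x : {x // x ∈ Sᶜ} → ℝ, x ≠ 0 ∧
        (Γ.submatrix (Subtype.val : {x // x ∈ Sᶜ} → Fin n) Subtype.val).mulVec x = μ • x) →
        |μ| ≤ lam) := by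
  have hA : (Γ + Δ).IsIrreducible :=
    (isIrreducible_iff_exists_pow_pos fun i j => add_nonneg (hΓ0 i j) (hΔ0 i j)).2 hirr
  obtain ⟨N, hB⟩ := hA.exists_sum_pow_pos
  have hΓB : Commute Γ (∑ k ∈ range N, (Γ + Δ) ^ k) :=
    Commute.sum_right _ _ _ fun k _ => ((Commute.refl Γ).add_right hcomm).pow_right k
  obtain ⟨i₀, -⟩ := hS
  have : Nonempty (Fin n) := ⟨i₀⟩
  obtain ⟨t, z, hz, hΓz⟩ := exists_pos_mulVec_eq_smul_of_commute hB hΓB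
  have ht : 0 ≤ t := (abs_nonneg t).trans
    (abs_le_of_mulVec_eq_smul hΓ0 hz hΓz (fun h => (hz i₀).ne' (congrFun h i₀)) hΓz)
  have hvS := submatrix_val_mulVec_eq_smul (fun i hi j hj => hblock i j (.inl ⟨hi, hj⟩)) hΓz
  have hvSc := submatrix_val_mulVec_eq_smul (T := Sᶜ)
    (fun i hi j hj => hblock i j (.inr ⟨mem_compl.1 hi, by simpa using hj⟩)) hΓz
  exact ⟨t, _, _, ht, fun i => hz i, fun i => hz i, hvS, hvSc,
    fun _ ⟨_, hx0, hx⟩ =>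
      abs_le_of_mulVec_eq_smul (fun _ _ => hΓ0 _ _) (fun i => hz i.1) hvS hx0 hx,
    fun _ ⟨_, hx0, hx⟩ =>
      abs_le_of_mulVec_eq_smul (fun _ _ => hΓ0 _ _) (fun i => hz i.1) hvSc hx0 hx⟩

/-- Let `Γ, Δ` be commuting nonnegative `n × n` real matrices with `Γ + Δ`
irreducible. If `S` and its complement are nonempty and `Γ i j = 0` whenever exactly one
of `i, j` lies in `S`, then the two diagonal blocks `Γ[S]` and `Γ[Sᶜ]` have a common
dominant eigenvalue `lam ≥ 0`, each with a strictly positive eigenvector, and every real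
eigenvalue `μ` of either block satisfies `|μ| ≤ lam`. -/
theorem diagonal_blocks_same_dominant_eigenvalue
    (n : ℕ) (hn : 1 ≤ n) (Γ Δ : Matrix (Fin n) (Fin n) ℝ)
    (hΓ0 : ∀ i j, 0 ≤ Γ i j) (hΔ0 : ∀ i j, 0 ≤ Δ i j)
    (hcomm : Γ * Δ = Δ * Γ)
    (hirr : ∀ i j, ∃ m : ℕ, 1 ≤ m ∧ 0 < ((Γ + Δ) ^ m) i j)
    (S : Finset (Fin n)) (hS : S.Nonempty) (hSc : Sᶜ.Nonempty)
    (hblock : ∀ i j : Fin n, ((i ∈ S ∧ j ∉ S) ∨ (i ∉ S ∧ j ∈ S)) → Γ i j = 0) :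
    ∃ (lam : ℝ) (v : {x // x ∈ S} → ℝ) (w : {x // x ∈ Sᶜ} → ℝ),
      0 ≤ lam ∧ (∀ i, 0 < v i) ∧ (∀ i, 0 < w i) ∧
      (Γ.submatrix (Subtype.val : {x // x ∈ S} → Fin n) Subtype.val).mulVec v = lam • v ∧
      (Γ.submatrix (Subtype.val : {x // x ∈ Sᶜ} → Fin n) Subtype.val).mulVec w = lam • w ∧
      (∀ μ : ℝ, (∃ x : {x // x ∈ S} → ℝ, x ≠ 0 ∧
        (Γ.submatrix (Subtype.val : {x // x ∈ S} → Fin n) Subtype.val).mulVec x = μ • x) →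
        |μ| ≤ lam) ∧
      (∀ μ : ℝ, (∃ x : {x // x ∈ Sᶜ} → ℝ, x ≠ 0 ∧
        (Γ.submatrix (Subtype.val : {x // x ∈ Sᶜ} → Fin n) Subtype.val).mulVec x = μ • x) →
        |μ| ≤ lam) :=
  diagonal_blocks_same_dominant_eigenvalue_general n Γ Δ hΓ0 hΔ0 hcomm hirr S hS hblock
end

section
/- Let Γ, Δ be n×n matrices with nonnegative integer entries and define the map Z on vectors ρ ∈ ℝⁿ with entries ≥ 1 by (Zρ)_k = sqrt( Π_i ρ_i^{Γ_{ik}} + Π_j ρ_j^{Δ_{jk}} ). If there exists ρ⁰ ∈ ℝⁿ with all entries strictly greater than 1 such that (Zρ⁰)_k < ρ⁰_k for every k, then there exists ρ ∈ ℝⁿ with all entries strictly greater than 1 such that Zρ = ρ, i.e., (Γ, Δ) admits a fixed point labeling. -/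
/-!
`Z` is monotone on nonnegative vectors, maps the constant vector `1` to the constant
vector `√2 ≥ 1`, and by hypothesis maps `ρ⁰` below itself. Hence it maps the box `[1, ρ⁰]`
into itself, and Knaster–Tarski on this complete lattice gives a fixed point `ρ ≥ 1`;
then `ρ = Zρ ≥ √2 > 1`.
-/

open Set

theorem exists_fixedPoint_mem_Icc_of_monotoneOn {α : Type*} [ConditionallyCompleteLattice α]
    {f : α → α} {a b : α} (hab : a ≤ b) (hf : MonotoneOn f (Icc a b))
    (ha : a ≤ f a) (hb : f b ≤ b) : ∃ x ∈ Icc a b, f x = x := by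
  have hmaps : MapsTo f (Icc a b) (Icc a b) := fun x hx =>
    ⟨ha.trans (hf (left_mem_Icc.2 hab) hx hx.1), (hf hx (right_mem_Icc.2 hab) hx.2).trans hb⟩
  have : Fact (a ≤ b) := ⟨hab⟩
  let F : Icc a b →o Icc a b := ⟨hmaps.restrict, fun x y hxy => hf x.2 y.2 hxy⟩
  exact ⟨_, F.lfp.2, congrArg Subtype.val F.map_lfp⟩

section LabelingMap

variable {ι : Type*} [Fintype ι]

/-- The map `Z` of the statement. -/
noncomputable def labelingMap (Γ Δ : Matrix ι ι ℕ) (ρ : ι → ℝ) : ι → ℝ :=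
  fun k => √((∏ i, ρ i ^ Γ i k) + ∏ j, ρ j ^ Δ j k)

theorem one_le_prod_pow {ρ : ι → ℝ} (hρ : 1 ≤ ρ) (M : Matrix ι ι ℕ) (k : ι) :
    1 ≤ ∏ i, ρ i ^ M i k :=
  Finset.one_le_prod fun i _ => one_le_pow₀ (hρ i)

theorem prod_pow_le_prod_pow {ρ σ : ι → ℝ} (hρ : 0 ≤ ρ) (hρσ : ρ ≤ σ) (M : Matrix ι ι ℕ)
    (k : ι) : ∏ i, ρ i ^ M i k ≤ ∏ i, σ i ^ M i k :=
  Finset.prod_le_prod (fun i _ => pow_nonneg (hρ i) _)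
    (fun i _ => pow_le_pow_left₀ (hρ i) (hρσ i) _)

theorem labelingMap_monotoneOn (Γ Δ : Matrix ι ι ℕ) : MonotoneOn (labelingMap Γ Δ) (Ici 0) :=
  fun _ hρ _ _ hρσ k => Real.sqrt_le_sqrt <|
    add_le_add (prod_pow_le_prod_pow hρ hρσ Γ k) (prod_pow_le_prod_pow hρ hρσ Δ k)

theorem sqrt_two_le_labelingMap (Γ Δ : Matrix ι ι ℕ) {ρ : ι → ℝ} (hρ : 1 ≤ ρ) (k : ι) :
    √2 ≤ labelingMap Γ Δ ρ k :=
  Real.sqrt_le_sqrt <| by linarith [one_le_prod_pow hρ Γ k, one_le_prod_pow hρ Δ k]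

theorem one_le_labelingMap (Γ Δ : Matrix ι ι ℕ) {ρ : ι → ℝ} (hρ : 1 ≤ ρ) :
    1 ≤ labelingMap Γ Δ ρ :=
  fun k => Real.one_lt_sqrt_two.le.trans (sqrt_two_le_labelingMap Γ Δ hρ k)

end LabelingMap

/-- Define `(Zρ) k = √(∏ i, ρ i ^ Γ i k + ∏ j, ρ j ^ Δ j k)`. If there is a
vector `ρ⁰` with all entries `> 1` such that `(Zρ⁰) k < ρ⁰ k` for all `k`, then `Z` has a
fixed point with all entries `> 1`, i.e. `(Γ, Δ)` admits a fixed point labeling. -/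
theorem fixed_point_labeling_of_Z_decreasing_point
    (n : ℕ) (Γ Δ : Matrix (Fin n) (Fin n) ℕ)
    (ρ0 : Fin n → ℝ) (hρ0 : ∀ k, 1 < ρ0 k)
    (hZ : ∀ k, Real.sqrt ((∏ i, ρ0 i ^ (Γ i k)) + (∏ j, ρ0 j ^ (Δ j k))) < ρ0 k) :
    ∃ ρ : Fin n → ℝ, (∀ k, 1 < ρ k) ∧
      ∀ k, Real.sqrt ((∏ i, ρ i ^ (Γ i k)) + (∏ j, ρ j ^ (Δ j k))) = ρ k := by
  obtain ⟨ρ, ⟨hρ1, -⟩, hfix⟩ := exists_fixedPoint_mem_Icc_of_monotoneOn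
    (f := labelingMap Γ Δ) (fun k => (hρ0 k).le)
    ((labelingMap_monotoneOn Γ Δ).mono fun _ hρ => zero_le_one.trans hρ.1)
    (one_le_labelingMap Γ Δ le_rfl) (fun k => (hZ k).le)
  refine ⟨ρ, fun k => ?_, congrFun hfix⟩
  calc 1 < √2 := Real.one_lt_sqrt_two
    _ ≤ labelingMap Γ Δ ρ k := sqrt_two_le_labelingMap Γ Δ hρ1 k
    _ = ρ k := congrFun hfix k
end
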